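/- arXiv:1601.06065 — 3 statements merged into one kernel-verified Lean document; each statement's English description precedes it below -/
import Mathlib

section
/- Let s : N_i → (0,1) be target service rates at link i, and suppose β : N_i → ℝ satisfies s_i·Z_i = e^{β_{ii}} and s_j·Z_i = e^{β_{ij}} ∏_{k∈N_i\{i,j}}(1 + e^{β_{ik}}) for all j ∈ N_i \ {i}, where Z_i = e^{β_{ii}} + ∏_{j∈N_i\{i}}(1 + e^{β_{ij}}). Then the Gibbs distribution b̂_i(x) = Z_i⁻¹ ∏_{k:x_k=1} e^{β_{ik}} on I_i has marginals P(x_j = 1) = s_j for every j ∈ N_i. -/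
open Finset Real

/-- Sufficiency of the local fugacity equations under the conflict graph model:
if `β` satisfies `s_i · Z = exp (β i)` and, for all `j ≠ i`,
`s_j · Z = exp (β j) ∏_{k ≠ i,j} (1 + exp (β k))` with
`Z = exp (β i) + ∏_{j ≠ i} (1 + exp (β j))`, then the local Gibbs distribution
`b̂(x) = Z⁻¹ ∏_{k : x_k = 1} exp (β k)` on the feasible schedules has
marginals equal to the target service rates `s`. -/
theorem conflict_graph_fugacity_sufficiency
    {ι : Type*} [Fintype ι] [DecidableEq ι] (i : ι) (β s : ι → ℝ) (Z : ℝ)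
    (hs : ∀ j, 0 < s j ∧ s j < 1)
    (hZ : Z = Real.exp (β i) + ∏ j ∈ Finset.univ.erase i, (1 + Real.exp (β j)))
    (hi : s i * Z = Real.exp (β i))
    (hj : ∀ j, j ≠ i → s j * Z =
      Real.exp (β j) * ∏ k ∈ (Finset.univ.erase i).erase j, (1 + Real.exp (β k))) :
    ∀ j, ∑ x ∈ Finset.univ.filter (fun x : ι → Bool =>
        (x = (fun k => decide (k = i)) ∨ x i = false) ∧ x j = true),
      Z⁻¹ * ∏ k ∈ Finset.univ.filter (fun k => x k = true), Real.exp (β k)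
      = s j := by
  have hZpos : 0 < Z := by
    nlinarith [Real.exp_pos (β i), (hs i).1, (hs i).2, hi]
  intro j
  by_cases hji : j = i
  · subst hji
    have hset : Finset.univ.filter (fun x : ι → Bool =>
        (x = (fun k => decide (k = j)) ∨ x j = false) ∧ x j = true)
        = {fun k => decide (k = j)} := by
      ext x
      simp only [Finset.mem_filter, Finset.mem_univ, true_and, Finset.mem_singleton]
      constructor
      · rintro ⟨h1 | h2, h3⟩
        · exact h1
        · rw [h2] at h3; exact absurd h3 (by simp)
      · rintro rfl
        exact ⟨Or.inl rfl, by simp⟩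
    rw [hset, Finset.sum_singleton]
    have hset2 : Finset.univ.filter (fun k => decide (k = j) = true) = {j} := by
      ext k; simp
    rw [hset2, Finset.prod_singleton, ← hi]
    field_simp
  · have hset : Finset.univ.filter (fun x : ι → Bool =>
        (x = (fun k => decide (k = i)) ∨ x i = false) ∧ x j = true)
        = Finset.univ.filter (fun x : ι → Bool => x i = false ∧ x j = true) := by
      ext x
      simp only [Finset.mem_filter, Finset.mem_univ, true_and]
      constructor
      · rintro ⟨h1 | h2, h3⟩
        · rw [h1] at h3; simp at h3; exact absurd h3 hji
        · exact ⟨h2, h3⟩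
      · rintro ⟨h1, h2⟩
        exact ⟨Or.inr h1, h2⟩
    rw [hset, ← Finset.mul_sum]
    set S := (Finset.univ.erase i).erase j with hS
    have hiS : i ∉ S := by simp [hS]
    have hjS : j ∉ S := by simp [hS]
    have key : ∑ x ∈ Finset.univ.filter (fun x : ι → Bool => x i = false ∧ x j = true),
        ∏ k ∈ Finset.univ.filter (fun k => x k = true), Real.exp (β k)
        = ∑ t ∈ S.powerset, Real.exp (β j) * ∏ k ∈ t, Real.exp (β k) := by
      refine Finset.sum_nbij' (fun x => (Finset.univ.filter (fun k => x k = true)).erase j)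
        (fun t => fun k => decide (k = j ∨ k ∈ t)) ?_ ?_ ?_ ?_ ?_
      · intro x hx
        simp only [Finset.mem_filter, Finset.mem_univ, true_and] at hx
        rw [Finset.mem_powerset]
        intro k hk
        simp only [Finset.mem_erase, Finset.mem_filter, Finset.mem_univ, true_and] at hk
        simp only [hS, Finset.mem_erase, Finset.mem_univ, and_true]
        refine ⟨hk.1, ?_⟩
        rintro rfl
        rw [hx.1] at hk
        exact absurd hk.2 (by simp)
      · intro t ht
        rw [Finset.mem_powerset] at ht
        simp only [Finset.mem_filter, Finset.mem_univ, true_and]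
        constructor
        · simp only [decide_eq_false_iff_not]
          rintro (rfl | hit)
          · exact hji rfl
          · exact hiS (ht hit)
        · simp
      · intro x hx
        simp only [Finset.mem_filter, Finset.mem_univ, true_and] at hx
        funext k
        by_cases hkj : k = j
        · subst hkj; simp [hx.2]
        · simp only [Finset.mem_erase, Finset.mem_filter, Finset.mem_univ, true_and]
          by_cases hxk : x k = true
          · simp [hkj, hxk]
          · simp only [Bool.not_eq_true] at hxk
            simp [hkj, hxk]
      · intro t ht
        rw [Finset.mem_powerset] at ht
        ext k
        simp only [Finset.mem_erase, Finset.mem_filter, Finset.mem_univ, true_and,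
          decide_eq_true_eq]
        constructor
        · rintro ⟨hkj, rfl | hk⟩
          · exact absurd rfl hkj
          · exact hk
        · intro hk
          exact ⟨fun h => hjS (h ▸ ht hk), Or.inr hk⟩
      · intro x hx
        simp only [Finset.mem_filter, Finset.mem_univ, true_and] at hx
        have hjmem : j ∈ Finset.univ.filter (fun k => x k = true) := by
          simp [hx.2]
        rw [← Finset.mul_prod_erase _ _ hjmem]
    rw [key, ← Finset.mul_sum]
    have hprod : ∑ t ∈ S.powerset, ∏ k ∈ t, Real.exp (β k)
        = ∏ k ∈ S, (1 + Real.exp (β k)) := by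
      rw [show (∏ k ∈ S, (1 + Real.exp (β k))) = ∏ k ∈ S, (Real.exp (β k) + 1) by
        simp [add_comm], Finset.prod_add]
      exact Finset.sum_congr rfl fun t ht => by simp
    have hjj := hj j hji
    rw [← hS] at hjj
    rw [hprod, ← hjj]
    field_simp
end

section
/- Under the conflict graph model at link i with the local Gibbs distribution given by fugacities β_{ik} (as above), the service rates s_i = e^{β_{ii}}/Z_i and s_j = (1 - s_i)·e^{β_{ij}}/(1 + e^{β_{ij}}) for j ≠ i determine the fugacities: e^{β_{ij}} = s_j/(1 - s_i - s_j) for j ∈ N_i \ {i}, and e^{β_{ii}} = (s_i/(1 - s_i)) · ∏_{j∈N_i\{i}} (1 - s_i)/(1 - s_i - s_j), provided 0 < s_i, 0 < s_j, and s_i + s_j < 1 for all j ≠ i. -/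
/-!
Each constraint for `j ≠ i` is a logistic relation `s j = c * x / (1 + x)` with `c = 1 - s i` and
`x = exp (β j)`, which solves to `x = s j / (c - s j)` and hence `1 + x = c / (c - s j)`. The
constraint at `i` reads `s i = e / (e + P)` with `e = exp (β i)` and `P = ∏ (1 + exp (β j))`, which solves to
`e = s i / (1 - s i) * P`; substituting the previous expression for each factor of `P` gives
the closed form.
-/

open Finset Real

section Logistic

variable {K : Type*} [Field K] {c s x : K}

lemma mul_sub_eq_of_eq_mul_div_one_add (hx : 1 + x ≠ 0) (h : s = c * x / (1 + x)) :
    x * (c - s) = s := by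
  rw [eq_div_iff hx] at h
  linear_combination -h

lemma sub_ne_zero_of_eq_mul_div_one_add (hx : 1 + x ≠ 0) (hs : s ≠ 0)
    (h : s = c * x / (1 + x)) : c - s ≠ 0 := by
  intro hcs
  apply hs
  rw [← mul_sub_eq_of_eq_mul_div_one_add hx h, hcs, mul_zero]

lemma eq_div_sub_of_eq_mul_div_one_add (hx : 1 + x ≠ 0) (hs : s ≠ 0)
    (h : s = c * x / (1 + x)) : x = s / (c - s) :=
  eq_div_of_mul_eq (sub_ne_zero_of_eq_mul_div_one_add hx hs h)
    (mul_sub_eq_of_eq_mul_div_one_add hx h)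

lemma one_add_eq_div_sub_of_eq_mul_div_one_add (hx : 1 + x ≠ 0) (hs : s ≠ 0)
    (h : s = c * x / (1 + x)) : 1 + x = c / (c - s) := by
  have hcs := sub_ne_zero_of_eq_mul_div_one_add hx hs h
  rw [eq_div_iff hcs]
  linear_combination mul_sub_eq_of_eq_mul_div_one_add hx h

end Logistic

lemma eq_div_one_sub_mul_of_eq_div_add {K : Type*} [Field K] {e P s : K} (hP : P ≠ 0)
    (hZ : e + P ≠ 0) (h : s = e / (e + P)) : e = s / (1 - s) * P := by
  rw [eq_div_iff hZ] at h
  have hs : 1 - s ≠ 0 := by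
    intro hs
    apply hP
    linear_combination (e + P) * hs + h
  field_simp
  linear_combination -h

theorem conflict_graph_fugacity_inversion_general
    {ι : Type*} [Fintype ι] [DecidableEq ι] (i : ι) (β s : ι → ℝ) (Z : ℝ)
    (hZ : Z = Real.exp (β i) + ∏ j ∈ Finset.univ.erase i, (1 + Real.exp (β j)))
    (hsj : ∀ j, j ≠ i → 0 < s j ∧ s i + s j < 1)
    (hmi : s i = Real.exp (β i) / Z)
    (hmj : ∀ j, j ≠ i →
      s j = (1 - s i) * Real.exp (β j) / (1 + Real.exp (β j))) :
    (∀ j, j ≠ i → Real.exp (β j) = s j / (1 - s i - s j)) ∧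
    Real.exp (β i) = (s i / (1 - s i)) *
      ∏ j ∈ Finset.univ.erase i, (1 - s i) / (1 - s i - s j) := by
  have hx (j : ι) : 1 + exp (β j) ≠ 0 := by positivity
  refine ⟨fun j hj => eq_div_sub_of_eq_mul_div_one_add (hx j) (hsj j hj).1.ne' (hmj j hj), ?_⟩
  have hprod : ∏ j ∈ univ.erase i, (1 - s i) / (1 - s i - s j) =
      ∏ j ∈ univ.erase i, (1 + exp (β j)) :=
    prod_congr rfl fun j hj => by
      have hj := ne_of_mem_erase hj
      exact (one_add_eq_div_sub_of_eq_mul_div_one_add (hx j) (hsj j hj).1.ne' (hmj j hj)).symm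
  have hP : 0 < ∏ j ∈ univ.erase i, (1 + exp (β j)) := prod_pos fun j _ => by positivity
  rw [hprod]
  exact eq_div_one_sub_mul_of_eq_div_add hP.ne' (by positivity) (hZ ▸ hmi)

/-- Inversion of the service-rate equations under the conflict graph model:
if the Gibbs marginals equal the target rates `s` (with `0 < s i`, `0 < s j`,
`s i + s j < 1` for `j ≠ i`), then the fugacities have the closed form
`exp (β j) = s j / (1 - s i - s j)` for `j ≠ i` and
`exp (β i) = (s i/(1 - s i)) ∏_{j ≠ i} (1 - s i)/(1 - s i - s j)`. -/
theorem conflict_graph_fugacity_inversion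
    {ι : Type*} [Fintype ι] [DecidableEq ι] (i : ι) (β s : ι → ℝ) (Z : ℝ)
    (hZ : Z = Real.exp (β i) + ∏ j ∈ Finset.univ.erase i, (1 + Real.exp (β j)))
    (hsi : 0 < s i)
    (hsj : ∀ j, j ≠ i → 0 < s j ∧ s i + s j < 1)
    (hmi : s i = Real.exp (β i) / Z)
    (hmj : ∀ j, j ≠ i →
      s j = (1 - s i) * Real.exp (β j) / (1 + Real.exp (β j))) :
    (∀ j, j ≠ i → Real.exp (β j) = s j / (1 - s i - s j)) ∧
    Real.exp (β i) = (s i / (1 - s i)) *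
      ∏ j ∈ Finset.univ.erase i, (1 - s i) / (1 - s i - s j) :=
  conflict_graph_fugacity_inversion_general i β s Z hZ hsj hmi hmj
end

section
/- With a, c_j as in the previous statement (a = s₀∏(1+c_k)/(1-s₀), c_j = s_j/(1-s₀-s_j), 0 < s₀, 0 < s_j, s₀+s_j < 1), for each j: c_j ∏_{k≠j} (1 + c_k) / (a + ∏_k (1 + c_k)) = s_j. -/
open Finset

/-!
The fugacities are chosen so that `1 + c k = (1 - s₀) / (1 - s₀ - s k)`. Hence the partition
function `a + ∏ (1 + c k)` equals `∏ (1 + c k) / (1 - s₀)`, while the unnormalised weight of `j`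
being active is `c j / (1 + c j) * ∏ (1 + c k) = s j / (1 - s₀) * ∏ (1 + c k)`; their ratio is `s j`.
-/

theorem Finset.prod_erase_eq_div₀ {ι K : Type*} [CommGroupWithZero K] [DecidableEq ι]
    {s : Finset ι} (f : ι → K) {a : ι} (h : a ∈ s) (ha : f a ≠ 0) :
    ∏ x ∈ s.erase a, f x = (∏ x ∈ s, f x) / f a := by
  rw [eq_div_iff ha, prod_erase_mul _ _ h]

theorem one_add_div_sub_eq_div {K : Type*} [Field K] {u v : K} (h : u - v ≠ 0) :
    1 + v / (u - v) = u / (u - v) := by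
  rw [one_add_div h, sub_add_cancel]

theorem conflict_graph_fugacity_verification_neighbor_general (n : ℕ) (s₀ : ℝ)
    (s : Fin n → ℝ)
    (hs : ∀ j, 0 < s j ∧ s₀ + s j < 1)
    (c : Fin n → ℝ) (hc : ∀ j, c j = s j / (1 - s₀ - s j))
    (a : ℝ) (ha : a = s₀ * (∏ k, (1 + c k)) / (1 - s₀)) :
    ∀ j, c j * (∏ k ∈ Finset.univ.erase j, (1 + c k)) /
        (a + ∏ k, (1 + c k)) = s j := by
  intro j
  have hs₀_ne : 1 - s₀ ≠ 0 := by linarith [hs j]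
  have hden (k : Fin n) : 1 - s₀ - s k ≠ 0 := by linarith [hs k]
  have hfactor (k : Fin n) : 1 + c k = (1 - s₀) / (1 - s₀ - s k) :=
    hc k ▸ one_add_div_sub_eq_div (hden k)
  have hfactor_ne (k : Fin n) : 1 + c k ≠ 0 := hfactor k ▸ div_ne_zero hs₀_ne (hden k)
  have hprod : ∏ k, (1 + c k) ≠ 0 := prod_ne_zero_iff.2 fun k _ => hfactor_ne k
  have hpartition : a + ∏ k, (1 + c k) = (∏ k, (1 + c k)) / (1 - s₀) := by
    rw [ha]
    field_simp
    ring
  rw [prod_erase_eq_div₀ _ (mem_univ j) (hfactor_ne j), hpartition, hfactor j, hc j]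
  field_simp [hden j]

/-- Verification of the neighbor service-rate equations: with
`c j = s j / (1 - s₀ - s j)` and `a = s₀ ∏ (1 + c k) / (1 - s₀)`, for every
neighbor `j` the Gibbs marginal `c j ∏_{k ≠ j} (1 + c k) / (a + ∏ (1 + c k))`
equals the target rate `s j`. -/
theorem conflict_graph_fugacity_verification_neighbor (n : ℕ) (s₀ : ℝ)
    (hs₀ : 0 < s₀ ∧ s₀ < 1) (s : Fin n → ℝ)
    (hs : ∀ j, 0 < s j ∧ s₀ + s j < 1)
    (c : Fin n → ℝ) (hc : ∀ j, c j = s j / (1 - s₀ - s j))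
    (a : ℝ) (ha : a = s₀ * (∏ k, (1 + c k)) / (1 - s₀)) :
    ∀ j, c j * (∏ k ∈ Finset.univ.erase j, (1 + c k)) /
        (a + ∏ k, (1 + c k)) = s j :=
  conflict_graph_fugacity_verification_neighbor_general n s₀ s hs c hc a ha
end
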